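/- arXiv:2204.12419 — 7 statements merged into one kernel-verified Lean document; each statement's English description precedes it below -/
import Mathlib

section
/- If A is a totally unimodular matrix and x is a real vector with Ax = 0, then there exists an integer vector x' with Ax' = 0 such that each coordinate x'_i is either the floor or the ceiling of x_i. -/
/-!
The solutions of `A z = 0` in the box `⌊x⌋ ≤ z ≤ ⌈x⌉` form a nonempty compact convex set, so
they have an extreme point `z`. At an extreme point, the columns of `A` indexed by the
coordinates strictly inside the box are linearly independent: a kernel vector supported on them
would let `z` move in both directions. Those columns therefore contain a nonsingular square
submatrix, which is invertible over `ℤ` because total unimodularity forces its determinant to be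
`±1`; the coordinates of `z` strictly inside the box are then integers. No integer lies strictly
between `⌊x i⌋` and `⌈x i⌉`, so every coordinate of `z` is an endpoint of its interval.
-/

open Matrix Set Filter Topology

theorem Int.intCast_notMem_Ioo_floor_ceil {α : Type*} [Ring α] [LinearOrder α]
    [IsStrictOrderedRing α] [FloorRing α] (x : α) (k : ℤ) : (k : α) ∉ Ioo (⌊x⌋ : α) ⌈x⌉ := by
  rintro ⟨hlo, hhi⟩
  have := Int.ceil_le_floor_add_one x
  norm_cast at hlo hhi
  omega

theorem Matrix.exists_isUnit_submatrix_of_linearIndependent_col {m ι K : Type*} [Field K]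
    [Fintype m] [Fintype ι] [DecidableEq ι] {M : Matrix m ι K} (hM : LinearIndependent K M.col) :
    ∃ r : ι → m, IsUnit (M.submatrix r id) := by
  obtain ⟨κ, a, -, hspan, hli⟩ := exists_linearIndependent' K M.row
  have hrank : Module.finrank K (Submodule.span K (range M.row)) = Fintype.card ι := by
    rw [← rank_eq_finrank_span_row, ← rank_transpose]
    exact hM.rank_matrix
  have htop : Submodule.span K (range M.row) = ⊤ :=
    Submodule.eq_top_of_finrank_eq (by rw [hrank, Module.finrank_fintype_fun_eq_card])
  let b := Module.Basis.mk hli (by rw [hspan, htop])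
  let _ := FiniteDimensional.fintypeBasisIndex b
  have hcard : Fintype.card ι = Fintype.card κ := by
    rw [← Module.finrank_eq_card_basis b, Module.finrank_fintype_fun_eq_card]
  let e := Fintype.equivOfCardEq hcard
  refine ⟨a ∘ e, ?_⟩
  rw [← linearIndependent_rows_iff_isUnit]
  exact hli.comp e e.injective

theorem Matrix.IsTotallyUnimodular.exists_map_intCast {m n R : Type*} [CommRing R]
    {A : Matrix m n R} (hA : A.IsTotallyUnimodular) : ∃ B : Matrix m n ℤ, B.map (↑) = A := by
  choose s hs using hA.apply
  exact ⟨of fun i j => s i j, by ext i j; simp [hs]⟩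

theorem Matrix.isUnit_of_isTotallyUnimodular_map_intCast {ι R : Type*} [Fintype ι]
    [DecidableEq ι] [CommRing R] [CharZero R] {N : Matrix ι ι ℤ}
    (hN : (N.map ((↑) : ℤ → R)).IsTotallyUnimodular) (hunit : IsUnit (N.map ((↑) : ℤ → R))) :
    IsUnit N := by
  obtain ⟨s, hs⟩ := (isTotallyUnimodular_iff_fintype _).mp hN ι id id
  rw [submatrix_id_id, ← Int.cast_det] at hs
  rw [isUnit_iff_isUnit_det, ← Int.cast_det, ← hs] at hunit
  rw [isUnit_iff_isUnit_det, Int.isUnit_iff]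
  rcases s with _ | _ | _
  · simp at hunit
  · exact .inr (by exact_mod_cast hs.symm)
  · exact .inl (by exact_mod_cast hs.symm)

theorem Matrix.eq_intCast_inv_mulVec_of_isUnit {ι R : Type*} [Fintype ι] [DecidableEq ι]
    [Ring R] {N : Matrix ι ι ℤ} (hN : IsUnit N) {v : ι → R} {b : ι → ℤ}
    (hv : N.map (↑) *ᵥ v = (↑) ∘ b) : v = (↑) ∘ (N⁻¹ *ᵥ b) := by
  have hinv : (N⁻¹).map ((↑) : ℤ → R) * N.map (↑) = 1 := by
    have := congrArg (Int.castRingHom R).mapMatrix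
      (nonsing_inv_mul N ((isUnit_iff_isUnit_det N).mp hN))
    rwa [map_mul, map_one] at this
  calc v = ((N⁻¹).map (↑) * N.map (↑)) *ᵥ v := by rw [hinv, one_mulVec]
    _ = (N⁻¹).map (↑) *ᵥ ((↑) ∘ b) := by rw [← mulVec_mulVec, hv]
    _ = (↑) ∘ (N⁻¹ *ᵥ b) := funext fun i => ((Int.castRingHom R).map_mulVec N⁻¹ b i).symm

theorem Matrix.IsTotallyUnimodular.exists_intCast_of_linearIndependent {m n K : Type*} [Field K]
    [CharZero K] [Fintype m] [Fintype n] {A : Matrix m n K} (hA : A.IsTotallyUnimodular)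
    {p : n → Prop} (hcol : LinearIndependent K fun j : {j // p j} => A.col j)
    {z : n → K} {c : m → ℤ} (hz : A *ᵥ z = (↑) ∘ c) (hint : ∀ j, ¬ p j → ∃ k : ℤ, z j = k) :
    ∀ j, ∃ k : ℤ, z j = k := by
  classical
  obtain ⟨r, hr⟩ := exists_isUnit_submatrix_of_linearIndependent_col
    (M := A.submatrix id (Subtype.val : {j // p j} → n)) hcol
  obtain ⟨B, rfl⟩ := hA.exists_map_intCast
  choose w hw using hint
  set N := B.submatrix r (Subtype.val : {j // p j} → n)
  have hN : IsUnit N := isUnit_of_isTotallyUnimodular_map_intCast (hA.submatrix r Subtype.val) hr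
  have hsys : N.map (↑) *ᵥ (fun j => z j) =
      (↑) ∘ fun k => c (r k) - ∑ j : {j // ¬ p j}, B (r k) j * w j j.2 := by
    ext k
    have hk := congrFun hz (r k)
    simp only [mulVec, dotProduct, map_apply, Function.comp_apply,
      ← Fintype.sum_subtype_add_sum_subtype p] at hk
    have hfixed : ∑ j : {j // ¬ p j}, (B (r k) j : K) * z j =
        ∑ j : {j // ¬ p j}, (B (r k) j : K) * w j j.2 :=
      Finset.sum_congr rfl fun j _ => by rw [hw j j.2]
    simp only [mulVec, dotProduct, N, map_apply, submatrix_apply, Function.comp_apply]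
    push_cast
    rw [← hk, ← hfixed, add_sub_cancel_right]
  have hv := congrFun (eq_intCast_inv_mulVec_of_isUnit hN hsys)
  intro j
  by_cases hj : p j
  · exact ⟨_, hv ⟨j, hj⟩⟩
  · exact ⟨w j hj, hw j hj⟩

theorem eq_zero_of_mem_extremePoints_of_eventually_add_smul_mem {E : Type*} [AddCommGroup E]
    [Module ℝ E] {S : Set E} {z d : E} (hz : z ∈ S.extremePoints ℝ)
    (hline : ∀ᶠ t in 𝓝 (0 : ℝ), z + t • d ∈ S) : d = 0 := by
  obtain ⟨ε, hε, hball⟩ := Metric.eventually_nhds_iff.mp hline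
  have hpos : z + (ε / 2) • d ∈ S := hball (by simp [abs_of_pos hε, hε])
  have hneg : z - (ε / 2) • d ∈ S := by
    simpa [sub_eq_add_neg] using hball (y := -(ε / 2)) (by simp [abs_of_pos hε, hε])
  have hseg := hz.2 hneg hpos (mem_openSegment_sub_add z _)
  simpa [hε.ne'] using hseg

theorem Matrix.linearIndependent_col_of_mem_extremePoints {m n : Type*} [Fintype n]
    {A : Matrix m n ℝ} {b : m → ℝ} {lo hi z : n → ℝ}
    (hz : z ∈ ({z | A *ᵥ z = b} ∩ Icc lo hi).extremePoints ℝ) :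
    LinearIndependent ℝ fun j : {j // z j ∈ Ioo (lo j) (hi j)} => A.col j := by
  classical
  by_contra hdep
  obtain ⟨g, hg, j₀, hj₀⟩ := Fintype.not_linearIndependent_iff.mp hdep
  set d : n → ℝ := fun j => if h : z j ∈ Ioo (lo j) (hi j) then g ⟨j, h⟩ else 0
  have hd_free (j : {j // z j ∈ Ioo (lo j) (hi j)}) : d j = g j := dif_pos j.2
  have hd_fixed (j : n) (hj : z j ∉ Ioo (lo j) (hi j)) : d j = 0 := dif_neg hj
  have hAd : A *ᵥ d = 0 := by
    ext i
    have hgi := congrFun hg i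
    simp only [Finset.sum_apply, Pi.smul_apply, col_apply, smul_eq_mul, Pi.zero_apply] at hgi
    simp only [mulVec, dotProduct, Pi.zero_apply,
      ← Fintype.sum_subtype_add_sum_subtype (fun j => z j ∈ Ioo (lo j) (hi j)), hd_free,
      fun j : {j // z j ∉ Ioo (lo j) (hi j)} => hd_fixed j j.2, mul_zero,
      Finset.sum_const_zero, add_zero]
    simpa only [mul_comm] using hgi
  refine hj₀ ((hd_free j₀).symm.trans (congrFun (?_ : d = 0) j₀))
  apply eq_zero_of_mem_extremePoints_of_eventually_add_smul_mem hz
  obtain ⟨hzb, hzlo, hzhi⟩ := extremePoints_subset hz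
  have hbox : ∀ i, ∀ᶠ t in 𝓝 (0 : ℝ), z i + t * d i ∈ Icc (lo i) (hi i) := by
    intro i
    by_cases hfree : z i ∈ Ioo (lo i) (hi i)
    · have hcont : Continuous fun t : ℝ => z i + t * d i := by fun_prop
      exact (hcont.tendsto' 0 (z i) (by simp)).eventually (Icc_mem_nhds hfree.1 hfree.2)
    · exact .of_forall fun t => by simpa [hd_fixed i hfree] using ⟨hzlo i, hzhi i⟩
  filter_upwards [eventually_all.mpr hbox] with t ht
  refine ⟨?_, fun i => (ht i).1, fun i => (ht i).2⟩
  rw [mem_ofPred_eq, mulVec_add, mulVec_smul, hAd, smul_zero, add_zero]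
  exact hzb

/-- If `A` is a totally unimodular matrix and `x` is a real vector with
`A x = 0`, then there exists an integer vector `x'` with `A x' = 0` such that each
coordinate `x'_i` is either the floor or the ceiling of `x_i`. -/
theorem tu_integer_rounding_of_kernel {m n : Type*} [Fintype m] [Fintype n]
    (A : Matrix m n ℝ) (hA : A.IsTotallyUnimodular)
    (x : n → ℝ) (hx : A.mulVec x = 0) :
    ∃ x' : n → ℤ, A.mulVec (fun i => (x' i : ℝ)) = 0 ∧
      ∀ i, x' i = ⌊x i⌋ ∨ x' i = ⌈x i⌉ := by
  have hP : IsCompact ({z | A *ᵥ z = 0} ∩ Icc (fun i => (⌊x i⌋ : ℝ)) fun i => (⌈x i⌉ : ℝ)) :=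
    isCompact_Icc.inter_left (isClosed_eq (by fun_prop) continuous_const)
  obtain ⟨z, hz⟩ := hP.extremePoints_nonempty
    ⟨x, hx, fun i => Int.floor_le (x i), fun i => Int.le_ceil (x i)⟩
  obtain ⟨hz0, hzbox⟩ := extremePoints_subset hz
  have hfixed (j : n) (hj : z j ∉ Ioo (⌊x j⌋ : ℝ) ⌈x j⌉) : z j = ⌊x j⌋ ∨ z j = ⌈x j⌉ :=
    (Icc_sdiff_Ioo_same ((hzbox.1 j).trans (hzbox.2 j))).subset ⟨⟨hzbox.1 j, hzbox.2 j⟩, hj⟩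
  have hint := hA.exists_intCast_of_linearIndependent
    (linearIndependent_col_of_mem_extremePoints hz) (c := 0) (by simpa using hz0)
    fun j hj => (hfixed j hj).elim (⟨_, ·⟩) (⟨_, ·⟩)
  have hround (j : n) : z j = ⌊x j⌋ ∨ z j = ⌈x j⌉ :=
    hfixed j fun hfree =>
      let ⟨k, hk⟩ := hint j
      Int.intCast_notMem_Ioo_floor_ceil (x j) k (hk ▸ hfree)
  have hcast : (fun j => ((⌊z j⌋ : ℤ) : ℝ)) = z :=
    funext fun j => by rcases hround j with h | h <;> rw [h, Int.floor_intCast]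
  refine ⟨fun j => ⌊z j⌋, by rw [hcast]; exact hz0, fun j => ?_⟩
  rcases hround j with h | h <;> simp [h]
end

section
/- If A is a totally unimodular matrix and there exists a nonzero real vector x with Ax = 0, then there exists a nonzero vector x' with coordinates in {-1, 0, 1} such that Ax' = 0 and the support of x' is contained in the support of x, with matching signs (x'_i > 0 implies x_i > 0 and x'_i < 0 implies x_i < 0). -/
/-
Among the nonzero kernel vectors of `A` whose signs conform to `x`, take one, `z`, of
inclusion-minimal support. Minimality forces every kernel vector supported in `supp z` to be a
multiple of `z`: otherwise subtracting a suitable multiple of it from `z` would kill one more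
coordinate without changing any sign. Hence, for `j ∈ supp z`, the columns of `A` indexed by
`supp z \ {j}` are independent, and some choice of rows makes them a nonsingular square
submatrix `D`. Cramer's rule writes each `z i / z j` as a ratio of two minors of `A`, both in
`{0, ±1}`, the one of `D` being nonzero; so all nonzero `|z i|` agree and `z / |z j|` works.
-/

open Matrix Function

section Conforms

variable {K n : Type*}

def Conforms [Zero K] [LT K] (y x : n → K) : Prop :=
  (∀ i, 0 < y i → 0 < x i) ∧ (∀ i, y i < 0 → x i < 0)

theorem Conforms.refl [Zero K] [LT K] (x : n → K) : Conforms x x :=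
  ⟨fun _ => id, fun _ => id⟩

theorem Conforms.trans [Zero K] [LT K] {x y z : n → K} (hzy : Conforms z y) (hyx : Conforms y x) :
    Conforms z x :=
  ⟨fun i hi => hyx.1 i (hzy.1 i hi), fun i hi => hyx.2 i (hzy.2 i hi)⟩

theorem Conforms.support_subset [Zero K] [LinearOrder K] {x y : n → K} (h : Conforms y x) :
    support y ⊆ support x := by
  intro i hi
  rcases (mem_support.mp hi).lt_or_gt with hneg | hpos
  · exact (h.2 i hneg).ne
  · exact (h.1 i hpos).ne'

theorem exists_conforms_support_minimal [Semiring K] [LT K] [Finite n] {V : Submodule K (n → K)}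
    {x : n → K} (hx : x ∈ V) (hx0 : x ≠ 0) :
    ∃ z ∈ V, z ≠ 0 ∧ Conforms z x ∧
      ∀ y ∈ V, y ≠ 0 → Conforms y z → ¬ support y ⊂ support z := by
  obtain ⟨z, ⟨hzV, hz0, hzx⟩, hmin⟩ := (InvImage.wf support wellFounded_lt).has_min
    {z | z ∈ V ∧ z ≠ 0 ∧ Conforms z x} ⟨x, hx, hx0, Conforms.refl x⟩
  exact ⟨z, hzV, hz0, hzx, fun y hyV hy0 hyz => hmin y ⟨hyV, hy0, hyz.trans hzx⟩⟩

variable [Field K] [LinearOrder K] [IsStrictOrderedRing K]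

theorem conforms_smul_of_pos {c : K} (hc : 0 < c) (x : n → K) : Conforms (c • x) x :=
  ⟨fun _ hi => pos_of_mul_pos_right hi hc.le, fun _ hi => neg_of_mul_neg_right hi hc.le⟩

theorem conforms_sub_of_abs_le {x y : n → K} (h : ∀ i, |y i| ≤ |x i|) :
    Conforms (x - y) x := by
  refine ⟨fun i hi => ?_, fun i hi => ?_⟩ <;>
  · have := h i
    rw [Pi.sub_apply] at hi
    cases abs_cases (x i) <;> cases abs_cases (y i) <;> linarith

theorem exists_conforms_sub_smul_support_ssubset [Fintype n] {x u : n → K} (hu : u ≠ 0)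
    (hux : support u ⊆ support x) :
    ∃ t : K, Conforms (x - t • u) x ∧ support (x - t • u) ⊂ support x := by
  classical
  obtain ⟨i₀, hi₀⟩ := ne_iff.mp hu
  obtain ⟨p, hp, hmin⟩ := Finset.exists_min_image {i | u i ≠ 0} (fun i => |x i / u i|)
    ⟨i₀, Finset.mem_filter.mpr ⟨Finset.mem_univ _, hi₀⟩⟩
  have hup : u p ≠ 0 := (Finset.mem_filter.mp hp).2
  have hconf : Conforms (x - (x p / u p) • u) x := by
    refine conforms_sub_of_abs_le fun i => ?_
    by_cases hui : u i = 0
    · simp [hui]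
    calc |((x p / u p) • u) i| = |x p / u p| * |u i| := by
          rw [Pi.smul_apply, smul_eq_mul, abs_mul]
      _ ≤ |x i / u i| * |u i| :=
          mul_le_mul_of_nonneg_right (hmin i (by simpa using hui)) (abs_nonneg _)
      _ = |x i| := by rw [abs_div, div_mul_cancel₀ _ (abs_ne_zero.mpr hui)]
  refine ⟨x p / u p, hconf, (Set.ssubset_iff_of_subset hconf.support_subset).mpr
    ⟨p, hux hup, ?_⟩⟩
  simp [div_mul_cancel₀ _ hup]

theorem exists_eq_smul_of_support_subset [Fintype n] {V : Submodule K (n → K)} {z w : n → K}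
    (hz : z ∈ V) (hmin : ∀ y ∈ V, y ≠ 0 → Conforms y z → ¬ support y ⊂ support z)
    (hw : w ∈ V) (hwz : support w ⊆ support z) :
    ∃ c : K, w = c • z := by
  by_contra! hne
  obtain ⟨j, hwj⟩ := ne_iff.mp (by simpa using hne 0)
  have hzj : z j ≠ 0 := hwz hwj
  set u := w - (w j / z j) • z
  have hu : u ≠ 0 := sub_ne_zero.mpr (hne _)
  have huz : support u ⊆ support z := (support_sub _ _).trans
    (Set.union_subset hwz (support_smul_subset_right _ _))
  obtain ⟨t, hconf, hssub⟩ := exists_conforms_sub_smul_support_ssubset hu huz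
  have huj : u j = 0 := by simp [u, div_mul_cancel₀ _ hzj]
  refine hmin _ (V.sub_mem hz (V.smul_mem t (V.sub_mem hw (V.smul_mem _ hz)))) ?_ hconf hssub
  refine ne_iff.mpr ⟨j, ?_⟩
  change z j - t * u j ≠ 0
  rwa [huj, mul_zero, sub_zero]

end Conforms

theorem eq_zero_or_abs_eq_one_of_mem_range_signType {R : Type*} [Ring R] [LinearOrder R]
    [IsOrderedRing R] {r : R}
    (hr : r ∈ Set.range (SignType.cast : SignType → R)) : r = 0 ∨ |r| = 1 := by
  obtain ⟨s, rfl⟩ := hr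
  cases s <;> simp

namespace Matrix

variable {m n T : Type*}

theorem mulVec_extend_zero {R : Type*} [NonUnitalNonAssocSemiring R] [Fintype n] [Fintype T]
    (A : Matrix m n R) {g : T → n} (hg : Injective g) (v : T → R) :
    A *ᵥ extend g v 0 = A.submatrix id g *ᵥ v := by
  ext i
  refine (Fintype.sum_of_injective g hg _ _ (fun k hk => ?_) fun t => ?_).symm
  · rw [extend_apply' _ _ _ (by simpa using hk), Pi.zero_apply, mul_zero]
  · rw [hg.extend_apply]; rfl

theorem exists_submatrix_det_ne_zero {K : Type*} [Field K] [Finite m] [Fintype T] [DecidableEq T]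
    (B : Matrix m T K) (hB : LinearMap.ker B.mulVecLin = ⊥) :
    ∃ f : T → m, (B.submatrix f id).det ≠ 0 := by
  obtain ⟨κ, a, -, hspan, hli⟩ := exists_linearIndependent' K B.row
  have htop : Submodule.span K (Set.range B.row) = ⊤ := by
    refine Submodule.eq_top_of_finrank_eq ?_
    rw [← rank_eq_finrank_span_row, rank, LinearMap.finrank_range_of_inj
      (LinearMap.ker_eq_bot.mp hB)]
  let e := (Module.Basis.mk hli (hspan.trans htop).ge).indexEquiv (Pi.basisFun K T)
  refine ⟨a ∘ e.symm, (isUnit_iff_isUnit_det _).mp ?_ |>.ne_zero⟩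
  exact linearIndependent_rows_iff_isUnit.mp (hli.comp _ e.symm.injective)

theorem cramer_mulVec {R : Type*} [CommRing R] [Fintype n] [DecidableEq n] (A : Matrix n n R)
    (y : n → R) :
    cramer A (A *ᵥ y) = A.det • y := by
  rw [cramer_eq_adjugate_mulVec, mulVec_mulVec, adjugate_mul, smul_mulVec, one_mulVec]

theorem updateCol_submatrix_eq_submatrix_update {R : Type*} [DecidableEq T] (A : Matrix m n R)
    (f : T → m) (g : T → n) (t : T) (j : n) :
    (A.submatrix f g).updateCol t (fun s => A (f s) j) = A.submatrix f (update g t j) := by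
  ext r s
  by_cases hs : s = t
  · subst hs; simp
  · simp [hs]

theorem IsTotallyUnimodular.eq_zero_or_abs_eq_of_submatrix_mulVec_eq {R : Type*} [CommRing R]
    [LinearOrder R] [IsStrictOrderedRing R] [Fintype T] [DecidableEq T] {A : Matrix m n R}
    (hA : A.IsTotallyUnimodular) {f : T → m} {g : T → n}
    (hdet : (A.submatrix f g).det ≠ 0) {y : T → R} {c : R} {j : n}
    (hy : A.submatrix f g *ᵥ y = c • fun t => A (f t) j) (t : T) :
    y t = 0 ∨ |y t| = |c| := by
  have hcramer : (A.submatrix f g).det * y t = c * (A.submatrix f (update g t j)).det := by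
    have := congrFun (cramer_mulVec (A.submatrix f g) y) t
    rwa [hy, map_smul, Pi.smul_apply, cramer_apply, updateCol_submatrix_eq_submatrix_update,
      Pi.smul_apply, smul_eq_mul, smul_eq_mul, eq_comm] at this
  have hunit : |(A.submatrix f g).det| = 1 := (eq_zero_or_abs_eq_one_of_mem_range_signType
    ((isTotallyUnimodular_iff_fintype A).mp hA T f g)).resolve_left hdet
  have habs := congrArg abs hcramer
  rw [abs_mul, abs_mul, hunit, one_mul] at habs
  rcases eq_zero_or_abs_eq_one_of_mem_range_signType
    ((isTotallyUnimodular_iff_fintype A).mp hA T f (update g t j)) with h | h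
  · left; simpa [h] using habs
  · right; rwa [h, mul_one] at habs

theorem IsTotallyUnimodular.eq_zero_or_abs_eq_of_forall_support_subset {K : Type*} [Field K]
    [LinearOrder K] [IsStrictOrderedRing K] [Finite m] [Fintype n] {A : Matrix m n K}
    (hA : A.IsTotallyUnimodular) {z : n → K} (hz : A *ᵥ z = 0)
    (hcirc : ∀ w, A *ᵥ w = 0 → support w ⊆ support z → ∃ c : K, w = c • z)
    {j : n} (hj : z j ≠ 0) (i : n) :
    z i = 0 ∨ |z i| = |z j| := by
  classical
  by_cases hij : i = j
  · exact Or.inr (hij ▸ rfl)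
  by_cases hi : z i = 0
  · exact Or.inl hi
  let g : {k // z k ≠ 0 ∧ k ≠ j} → n := Subtype.val
  have hg : Injective g := Subtype.val_injective
  have hextend_of_not : ∀ (v : {k // z k ≠ 0 ∧ k ≠ j} → K) (k : n),
      ¬ (z k ≠ 0 ∧ k ≠ j) → extend g v 0 k = 0 :=
    fun v k hk => extend_apply' _ _ _ fun ⟨l, hl⟩ => hk (hl ▸ l.2)
  have hker : LinearMap.ker (A.submatrix id g).mulVecLin = ⊥ := by
    refine LinearMap.ker_eq_bot'.mpr fun v hv => ?_
    obtain ⟨c, hc⟩ := hcirc (extend g v 0) (by rwa [mulVec_extend_zero _ hg])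
      (fun k hk => by_contra fun hzk => hk (hextend_of_not v k fun h => hzk h.1))
    have hc0 : c = 0 := by
      simpa [hextend_of_not v j, hj] using (congrFun hc j).symm
    funext k
    have := congrFun hc (g k)
    rwa [hg.extend_apply, hc0, zero_smul] at this
  obtain ⟨f, hf⟩ := exists_submatrix_det_ne_zero _ hker
  have hsplit : z = extend g (z ∘ g) 0 + Pi.single j (z j) := by
    funext k
    by_cases hkj : k = j
    · subst hkj; simp [hextend_of_not]
    by_cases hk : z k = 0
    · simp [hextend_of_not, hkj, hk]
    · rw [Pi.add_apply, Pi.single_eq_of_ne hkj, add_zero]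
      exact (hg.extend_apply (z ∘ g) 0 ⟨k, hk, hkj⟩).symm
  have hD : A.submatrix f g *ᵥ (z ∘ g) = (-z j) • fun t => A (f t) j := by
    funext t
    have := congrFun hz (f t)
    rw [hsplit, mulVec_add, mulVec_extend_zero _ hg, mulVec_single] at this
    simp only [Pi.add_apply, Pi.smul_apply, col_apply, op_smul_eq_mul] at this
    rw [Pi.smul_apply, smul_eq_mul, neg_mul, eq_neg_iff_add_eq_zero, mul_comm]
    exact this
  simpa using eq_zero_or_abs_eq_of_submatrix_mulVec_eq hA hf hD ⟨i, hi, hij⟩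

end Matrix

/-- If `A` is totally unimodular and there is a nonzero real vector `x` with
`A x = 0`, then there is a nonzero vector `x'` with coordinates in `{-1, 0, 1}` such that
`A x' = 0`, whose support is contained in the support of `x` with matching signs. -/
theorem tu_sign_vector_of_kernel {m n : Type*} [Fintype m] [Fintype n]
    (A : Matrix m n ℝ) (hA : A.IsTotallyUnimodular)
    (x : n → ℝ) (hx : A.mulVec x = 0) (hx0 : x ≠ 0) :
    ∃ x' : n → ℝ, x' ≠ 0 ∧ (∀ i, x' i ∈ ({-1, 0, 1} : Set ℝ)) ∧
      A.mulVec x' = 0 ∧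
      (∀ i, 0 < x' i → 0 < x i) ∧ (∀ i, x' i < 0 → x i < 0) := by
  have hker : ∀ w, w ∈ LinearMap.ker A.mulVecLin ↔ A *ᵥ w = 0 := fun w => Iff.rfl
  obtain ⟨z, hzA, hz0, hzx, hmin⟩ := exists_conforms_support_minimal ((hker x).mpr hx) hx0
  obtain ⟨j, hj⟩ := ne_iff.mp hz0
  have habs := hA.eq_zero_or_abs_eq_of_forall_support_subset hzA
    (fun w hw hwz => exists_eq_smul_of_support_subset hzA hmin ((hker w).mpr hw) hwz) hj
  have hscale : 0 < |z j|⁻¹ := inv_pos.mpr (abs_pos.mpr hj)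
  have hconf := (conforms_smul_of_pos hscale z).trans hzx
  refine ⟨|z j|⁻¹ • z, smul_ne_zero hscale.ne' hz0, fun i => ?_, ?_, hconf.1, hconf.2⟩
  · rcases habs i with h | h
    · simp [h]
    · have : |(|z j|⁻¹ • z) i| = 1 := by
        rw [Pi.smul_apply, smul_eq_mul, abs_mul, abs_inv, abs_abs, h,
          inv_mul_cancel₀ (abs_ne_zero.mpr hj)]
      rcases abs_eq zero_le_one |>.mp this with h' | h' <;> simp [h']
  · rw [mulVec_smul, (hker z).mp hzA, smul_zero]
end

section
/- Let a_1, ..., a_m be the columns of a totally unimodular matrix, and suppose sum_{i=1}^m λ_i a_i = 0. Then there exist signed circuits C_1, ..., C_t (each C_j a minimal dependent set partitioned as C_j^+ ⊔ C_j^- with sum_{i∈C_j^+} a_i - sum_{i∈C_j^-} a_i = 0) and real coefficients ν_1, ..., ν_t such that for every index i, λ_i = sum_{j : i∈C_j^+} ν_j - sum_{j : i∈C_j^-} ν_j. -/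
open Finset

/-- A set of column indices of `A` is dependent if the corresponding columns are
linearly dependent. -/
def Matrix.ColDep {m n : Type*} (A : Matrix m n ℝ) (S : Finset n) : Prop :=
  ¬ LinearIndependent ℝ (fun i : S => A.transpose i.1)

/-- A circuit: a minimal linearly dependent set of column indices. -/
def Matrix.IsCircuit {m n : Type*} (A : Matrix m n ℝ) (C : Finset n) : Prop :=
  A.ColDep C ∧ ∀ S ⊂ C, ¬ A.ColDep S

/-- A signed circuit: a circuit `C⁺ ⊔ C⁻` with `∑_{i∈C⁺} a_i - ∑_{i∈C⁻} a_i = 0`. -/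
def Matrix.IsSignedCircuit {m n : Type*} [Fintype m] [DecidableEq n]
    (A : Matrix m n ℝ) (Cp Cm : Finset n) : Prop :=
  Disjoint Cp Cm ∧ A.IsCircuit (Cp ∪ Cm) ∧
    (∑ i ∈ Cp, A.transpose i) - (∑ i ∈ Cm, A.transpose i) = 0

/-!
Normalise a dependence supported on a circuit `C` of a totally unimodular matrix to be `1` at some
`i₀ ∈ C`. The columns of `C \ {i₀}` are independent, so they contain an invertible square
submatrix, and Cramer's rule writes every other entry as a ratio of two minors, each in
`{0, 1, -1}`; by minimality of `C` no entry on `C` vanishes. So the dependence is the signed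
indicator of a signed circuit. Given any dependence `λ`, choose a circuit inside its support and
subtract the multiple of that signed circuit which kills one coordinate: the support shrinks, and
induction on its size writes `λ` as a combination of signed circuits.
-/

namespace Matrix

variable {m n : Type*}

theorem sum_smul_transpose_eq_mulVec {R : Type*} [CommSemiring R] [Fintype n]
    (A : Matrix m n R) (v : n → R) : ∑ i, v i • Aᵀ i = A *ᵥ v := by
  simp [mulVec_eq_sum]

theorem exists_submatrix_det_ne_zero_of_linearIndependent {K : Type*} [Field K] [Fintype m]
    [Fintype n] [DecidableEq n] (N : Matrix m n K) (hN : LinearIndependent K Nᵀ) :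
    ∃ r : n → m, (N.submatrix r id).det ≠ 0 := by
  have hrows : Submodule.span K (Set.range N.row) = ⊤ := by
    apply Submodule.eq_top_of_finrank_eq
    rw [← rank_eq_finrank_span_row, rank_eq_finrank_span_cols,
      Module.finrank_fintype_fun_eq_card]
    exact finrank_span_eq_card hN
  obtain ⟨κ, a, -, hspan, hli⟩ := exists_linearIndependent' K N.row
  let b : Module.Basis κ K (n → K) := .mk hli (by rw [hspan, hrows])
  have : Fintype κ := have := Module.Finite.finite_basis b; Fintype.ofFinite κ
  let e : κ ≃ n := Fintype.equivOfCardEq <| by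
    rw [← Module.finrank_eq_card_basis b, Module.finrank_fintype_fun_eq_card]
  refine ⟨a ∘ e.symm, ?_⟩
  rw [← isUnit_iff_ne_zero, ← isUnit_iff_isUnit_det, ← linearIndependent_rows_iff_isUnit]
  exact hli.comp e.symm e.symm.injective

theorem IsTotallyUnimodular.apply_mem_range_signType_cast_of_mulVec_eq_col
    {R ι : Type*} [CommRing R] [Fintype ι] [DecidableEq ι] {A : Matrix m n R}
    (hA : A.IsTotallyUnimodular) {r : ι → m} {c : ι → n} (hdet : (A.submatrix r c).det ≠ 0)
    {j : n} {x : ι → R} (hx : A.submatrix r c *ᵥ x = fun k => A (r k) j) (i : ι) :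
    x i ∈ Set.range SignType.cast := by
  have hTU := (isTotallyUnimodular_iff_fintype A).1 hA ι r
  have hcramer : (A.submatrix r c).det • x = cramer (A.submatrix r c) fun k => A (r k) j := by
    rw [← hx, cramer_eq_adjugate_mulVec, mulVec_mulVec, adjugate_mul, smul_mulVec, one_mulVec]
  have hupdate : (A.submatrix r c).updateCol i (fun k => A (r k) j) =
      A.submatrix r (Function.update c i j) := by
    ext k l
    by_cases hl : l = i <;> simp [hl]
  obtain ⟨s, hs⟩ := hTU c
  obtain ⟨s', hs'⟩ := hTU (Function.update c i j)
  have hss : (s : R) * s = 1 := by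
    rcases s with _ | _ | _
    · exact absurd hs.symm hdet
    all_goals simp
  refine ⟨s * s', ?_⟩
  calc ((s * s' : SignType) : R) = s * (A.submatrix r c).det * x i := by
        rw [SignType.coe_mul, hs', ← hupdate, ← cramer_apply, ← hcramer, Pi.smul_apply,
          smul_eq_mul, mul_assoc]
    _ = x i := by rw [← hs, hss, one_mul]

theorem IsTotallyUnimodular.apply_mem_range_signType_cast_of_mulVec_eq_zero {K : Type*}
    [Field K] [Fintype m] [Fintype n] [DecidableEq n] {A : Matrix m n K}
    (hA : A.IsTotallyUnimodular)
    {v : n → K} (hv : A *ᵥ v = 0) {i₀ : n} (hvi₀ : v i₀ = 1) {B : Finset n} (hi₀B : i₀ ∉ B)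
    (hvB : ∀ i ∉ insert i₀ B, v i = 0) (hB : LinearIndependent K fun i : B => Aᵀ i) (i : n) :
    v i ∈ Set.range SignType.cast := by
  by_cases hi : i ∈ insert i₀ B
  swap
  · exact ⟨0, by simp [hvB i hi]⟩
  rcases Finset.mem_insert.1 hi with rfl | hiB
  · exact ⟨1, by simp [hvi₀]⟩
  obtain ⟨r, hr⟩ :=
    exists_submatrix_det_ne_zero_of_linearIndependent (A.submatrix id ((↑) : B → n)) hB
  rw [submatrix_submatrix, Function.id_comp, Function.comp_id] at hr
  have hx : A.submatrix r (↑) *ᵥ (fun k : B => -v k) = fun k => A (r k) i₀ := by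
    funext k
    have h := congrFun hv (r k)
    rw [mulVec, dotProduct, ← Finset.sum_subset (Finset.subset_univ (insert i₀ B))
      fun j _ hj => by rw [hvB j hj, mul_zero], Finset.sum_insert hi₀B, hvi₀, mul_one,
      ← Finset.sum_coe_sort B] at h
    simp only [mulVec, dotProduct, submatrix_apply, mul_neg, Finset.sum_neg_distrib]
    exact (eq_neg_of_add_eq_zero_left h).symm
  obtain ⟨s, hs⟩ := hA.apply_mem_range_signType_cast_of_mulVec_eq_col hr hx ⟨i, hiB⟩
  exact ⟨-s, by simp [hs]⟩

theorem colDep_iff_exists_mulVec_eq_zero [Fintype n] (A : Matrix m n ℝ) (S : Finset n) :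
    A.ColDep S ↔ ∃ v : n → ℝ, (∀ i ∉ S, v i = 0) ∧ v ≠ 0 ∧ A *ᵥ v = 0 := by
  classical
  change ¬ LinearIndepOn ℝ (fun i => Aᵀ i) (S : Set n) ↔ _
  rw [not_linearIndepOn_finset_iff]
  constructor
  · rintro ⟨f, hf, i, hi, hfi⟩
    refine ⟨fun j => if j ∈ S then f j else 0, fun j hj => if_neg hj,
      Function.ne_iff.2 ⟨i, by simpa [hi] using hfi⟩, ?_⟩
    simpa [← sum_smul_transpose_eq_mulVec, ite_smul, Finset.sum_ite_mem] using hf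
  · rintro ⟨v, hvS, hv0, hAv⟩
    obtain ⟨i, hi⟩ := Function.ne_iff.1 hv0
    refine ⟨v, ?_, i, by_contra fun h => hi (hvS i h), hi⟩
    rw [Finset.sum_subset (subset_univ S) fun j _ hj => by simp [hvS j hj],
      sum_smul_transpose_eq_mulVec, hAv]

theorem ColDep.exists_isCircuit_subset {A : Matrix m n ℝ} {S : Finset n} (hS : A.ColDep S) :
    ∃ C ⊆ S, A.IsCircuit C := by
  obtain ⟨C, hCS, hC⟩ := exists_minimal_le_of_wellFoundedLT _ S hS
  exact ⟨C, hCS, hC.prop, fun T hT => hC.not_prop_of_lt hT⟩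

theorem IsCircuit.nonempty {A : Matrix m n ℝ} {C : Finset n} (hC : A.IsCircuit C) :
    C.Nonempty := by
  rw [Finset.nonempty_iff_ne_empty]
  rintro rfl
  exact hC.1 linearIndependent_empty_type

theorem IsCircuit.apply_ne_zero [Fintype n] [DecidableEq n] {A : Matrix m n ℝ} {C : Finset n}
    (hC : A.IsCircuit C) {v : n → ℝ} (hvC : ∀ i ∉ C, v i = 0) (hv0 : v ≠ 0) (hAv : A *ᵥ v = 0)
    {i : n} (hi : i ∈ C) : v i ≠ 0 := by
  intro hvi
  refine hC.2 (C.erase i) (erase_ssubset hi)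
    ((colDep_iff_exists_mulVec_eq_zero A _).2 ⟨v, fun j hj => ?_, hv0, hAv⟩)
  by_cases hji : j = i
  · exact hji ▸ hvi
  · exact hvC j fun hjC => hj (mem_erase.2 ⟨hji, hjC⟩)

theorem IsTotallyUnimodular.exists_sign_vector_of_isCircuit [Fintype m] [Fintype n]
    [DecidableEq n] {A : Matrix m n ℝ} (hA : A.IsTotallyUnimodular) {C : Finset n}
    (hC : A.IsCircuit C) :
    ∃ χ : n → ℝ, (∀ i, χ i ∈ Set.range SignType.cast) ∧ (∀ i, χ i ≠ 0 ↔ i ∈ C) ∧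
      A *ᵥ χ = 0 := by
  obtain ⟨μ, hμC, hμ0, hAμ⟩ := (colDep_iff_exists_mulVec_eq_zero A C).1 hC.1
  obtain ⟨i₀, hi₀⟩ : ∃ i, μ i ≠ 0 := Function.ne_iff.1 hμ0
  have hi₀C : i₀ ∈ C := by_contra fun h => hi₀ (hμC i₀ h)
  set χ := (μ i₀)⁻¹ • μ
  have hχC : ∀ i ∉ C, χ i = 0 := fun i hi => by simp [χ, hμC i hi]
  have hχ0 : χ ≠ 0 := smul_ne_zero (inv_ne_zero hi₀) hμ0
  have hAχ : A *ᵥ χ = 0 := by rw [mulVec_smul, hAμ, smul_zero]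
  refine ⟨χ, fun i => ?_, fun i => ⟨fun h => by_contra fun hi => h (hχC i hi),
    hC.apply_ne_zero hχC hχ0 hAχ⟩, hAχ⟩
  exact hA.apply_mem_range_signType_cast_of_mulVec_eq_zero hAχ (by simp [χ, hi₀])
    (Finset.notMem_erase i₀ C) (by rwa [Finset.insert_erase hi₀C])
    (not_not.1 (hC.2 _ (Finset.erase_ssubset hi₀C))) i

def _root_.signedIndicator {n : Type*} [DecidableEq n] (Cp Cm : Finset n) : n → ℝ :=
  fun i => (if i ∈ Cp then 1 else 0) - (if i ∈ Cm then 1 else 0)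

def signedCircuitVectors [Fintype m] [DecidableEq n] (A : Matrix m n ℝ) : Set (n → ℝ) :=
  {v | ∃ Cp Cm, A.IsSignedCircuit Cp Cm ∧ signedIndicator Cp Cm = v}

theorem sum_sub_sum_eq_mulVec_signedIndicator [Fintype n] [DecidableEq n]
    (A : Matrix m n ℝ) (Cp Cm : Finset n) :
    ∑ i ∈ Cp, Aᵀ i - ∑ i ∈ Cm, Aᵀ i = A *ᵥ signedIndicator Cp Cm := by
  simp only [← sum_smul_transpose_eq_mulVec, signedIndicator, sub_smul, ite_smul, one_smul,
    zero_smul, Finset.sum_sub_distrib]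
  rw [Fintype.sum_ite_mem Cp fun i => Aᵀ i, Fintype.sum_ite_mem Cm fun i => Aᵀ i]

theorem mulVec_eq_zero_of_mem_signedCircuitVectors [Fintype m] [Fintype n] [DecidableEq n]
    {A : Matrix m n ℝ} {v : n → ℝ} (hv : v ∈ A.signedCircuitVectors) : A *ᵥ v = 0 := by
  obtain ⟨Cp, Cm, ⟨-, -, hsum⟩, rfl⟩ := hv
  rwa [← sum_sub_sum_eq_mulVec_signedIndicator]

theorem mem_signedCircuitVectors_of_sign_vector [Fintype m] [Fintype n] [DecidableEq n]
    {A : Matrix m n ℝ} {C : Finset n} (hC : A.IsCircuit C) {χ : n → ℝ}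
    (hχ : ∀ i, χ i ∈ Set.range SignType.cast) (hχC : ∀ i, χ i ≠ 0 ↔ i ∈ C)
    (hAχ : A *ᵥ χ = 0) : χ ∈ A.signedCircuitVectors := by
  have hχ_eq : signedIndicator {i | χ i = 1} {i | χ i = -1} = χ := by
    funext i
    obtain ⟨s, hs⟩ := hχ i
    cases s <;> norm_num [signedIndicator, ← hs]
  refine ⟨_, _, ⟨Finset.disjoint_filter.2 fun i _ h1 h2 => by norm_num [h1] at h2, ?_, ?_⟩,
    hχ_eq⟩
  · convert hC
    ext i
    rw [← hχC]
    obtain ⟨s, hs⟩ := hχ i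
    cases s <;> norm_num [← hs]
  · rw [sum_sub_sum_eq_mulVec_signedIndicator, hχ_eq, hAχ]

theorem IsTotallyUnimodular.exists_card_support_sub_smul_lt [Fintype m] [Fintype n]
    [DecidableEq n] {A : Matrix m n ℝ} (hA : A.IsTotallyUnimodular) {v : n → ℝ}
    (hv : A *ᵥ v = 0) (hv0 : v ≠ 0) :
    ∃ χ ∈ A.signedCircuitVectors, ∃ c : ℝ, #{i | (v - c • χ) i ≠ 0} < #{i | v i ≠ 0} := by
  have hS : A.ColDep {i | v i ≠ 0} :=
    (colDep_iff_exists_mulVec_eq_zero A _).2 ⟨v, by simp, hv0, hv⟩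
  obtain ⟨C, hCS, hC⟩ := hS.exists_isCircuit_subset
  obtain ⟨χ, hχ, hχC, hAχ⟩ := hA.exists_sign_vector_of_isCircuit hC
  obtain ⟨i₀, hi₀⟩ := hC.nonempty
  have hχi₀ : χ i₀ ≠ 0 := (hχC i₀).2 hi₀
  refine ⟨χ, mem_signedCircuitVectors_of_sign_vector hC hχ hχC hAχ, v i₀ / χ i₀,
    Finset.card_lt_card ⟨fun i hi => ?_, fun hsub => ?_⟩⟩
  · by_contra hvi
    have hχi : χ i = 0 := by_contra fun h => hvi (hCS ((hχC i).1 h))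
    simp_all
  · have := hsub (hCS hi₀)
    simp [div_mul_cancel₀ _ hχi₀] at this

theorem IsTotallyUnimodular.mem_span_signedCircuitVectors [Fintype m] [Fintype n]
    [DecidableEq n] {A : Matrix m n ℝ} (hA : A.IsTotallyUnimodular) {v : n → ℝ}
    (hv : A *ᵥ v = 0) : v ∈ Submodule.span ℝ A.signedCircuitVectors := by
  induction hk : #{i | v i ≠ 0} using Nat.strong_induction_on generalizing v with
  | _ k ih =>
  rcases eq_or_ne v 0 with rfl | hv0
  · exact zero_mem _
  obtain ⟨χ, hχ, c, hlt⟩ := hA.exists_card_support_sub_smul_lt hv hv0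
  have hAχ := mulVec_eq_zero_of_mem_signedCircuitVectors hχ
  have hrest := ih _ (hk ▸ hlt) (by rw [mulVec_sub, mulVec_smul, hv, hAχ, smul_zero, sub_zero])
    rfl
  simpa using add_mem hrest (Submodule.smul_mem _ c (Submodule.subset_span hχ))

end Matrix

/-- Any linear dependence `∑ λ_i a_i = 0` among the columns of a totally
unimodular matrix decomposes as a combination of signed circuits: there are signed circuits
`C_1, …, C_t` and coefficients `ν_1, …, ν_t` with
`λ_i = ∑_{j : i ∈ C_j⁺} ν_j - ∑_{j : i ∈ C_j⁻} ν_j` for every `i`. -/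
theorem tu_dependence_decomposes_into_signed_circuits {m n : Type*}
    [Fintype m] [Fintype n] [DecidableEq n]
    (A : Matrix m n ℝ) (hA : A.IsTotallyUnimodular)
    (lam : n → ℝ) (hdep : ∑ i, lam i • A.transpose i = 0) :
    ∃ (t : ℕ) (Cp Cm : Fin t → Finset n) (ν : Fin t → ℝ),
      (∀ j, A.IsSignedCircuit (Cp j) (Cm j)) ∧
      ∀ i, lam i =
        (∑ j ∈ Finset.univ.filter (fun j => i ∈ Cp j), ν j) -
        (∑ j ∈ Finset.univ.filter (fun j => i ∈ Cm j), ν j) := by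
  rw [Matrix.sum_smul_transpose_eq_mulVec] at hdep
  obtain ⟨t, ν, χ, hsum⟩ := Submodule.mem_span_set'.1 (hA.mem_span_signedCircuitVectors hdep)
  choose Cp Cm hCirc hχ using fun j => (χ j).2
  refine ⟨t, Cp, Cm, ν, hCirc, fun i => ?_⟩
  simp [← hsum, ← hχ, signedIndicator, mul_sub, Finset.sum_sub_distrib, Finset.sum_filter]
end

section
/- Let A be a totally unimodular matrix of rank r with columns a_1,...,a_m, and suppose some signed circuit C = C^+ ⊔ C^- has |C^+| ≠ |C^-|. Then the root polytope conv{a_1,...,a_m} has affine dimension r. -/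
/-! A signed circuit is a linear relation among the columns with coefficients `±1`, whose
coefficient sum `|C⁺| - |C⁻|` is nonzero. Rescaling it to coefficient sum `1` writes `0` as an
affine combination of the columns, so the affine span of the columns passes through the origin
and its direction is their linear span, of dimension `rank A`. -/

open Finset

section AffineSpan

variable {k V ι : Type*} [Field k] [AddCommGroup V] [Module k V]

theorem zero_mem_affineSpan_of_sum_smul_eq_zero {s : Finset ι} {w : ι → k} {v : ι → V}
    (hw : ∑ i ∈ s, w i ≠ 0) (hv : ∑ i ∈ s, w i • v i = 0) :
    (0 : V) ∈ affineSpan k (Set.range v) := by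
  have hsum : ∑ i ∈ s, (∑ j ∈ s, w j)⁻¹ * w i = 1 := by
    rw [← mul_sum, inv_mul_cancel₀ hw]
  have hmem := affineCombination_mem_affineSpan hsum v
  rw [s.affineCombination_eq_linear_combination v _ hsum] at hmem
  simpa only [mul_smul, ← smul_sum, hv, smul_zero] using hmem

theorem direction_affineSpan_eq_span_of_zero_mem {s : Set V} (h : (0 : V) ∈ affineSpan k s) :
    (affineSpan k s).direction = Submodule.span k s := by
  ext v
  have hv := AffineSubspace.vsub_right_mem_direction_iff_mem h v
  rw [vsub_eq_sub, sub_zero] at hv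
  rw [hv, ← SetLike.mem_coe, ← affineSpan_insert_eq_affineSpan k h, affineSpan_insert_zero,
    SetLike.mem_coe]

theorem zero_mem_affineSpan_of_sum_sub_sum_eq_zero [CharZero k] {s t : Finset ι}
    (hst : Disjoint s t) (hcard : s.card ≠ t.card) {v : ι → V}
    (hv : ∑ i ∈ s, v i - ∑ i ∈ t, v i = 0) : (0 : V) ∈ affineSpan k (Set.range v) := by
  classical
  let w : ι → k := fun i => if i ∈ s then 1 else -1
  have hws : ∀ i ∈ s, w i = 1 := fun i hi => if_pos hi
  have hwt : ∀ i ∈ t, w i = -1 := fun i hi => if_neg (disjoint_right.mp hst hi)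
  refine zero_mem_affineSpan_of_sum_smul_eq_zero (s := s ∪ t) (w := w) ?_ ?_
  · rw [sum_union hst, sum_congr rfl hws, sum_congr rfl hwt]
    simp only [sum_const, nsmul_eq_mul, mul_one, mul_neg, ← sub_eq_add_neg, sub_ne_zero]
    exact_mod_cast hcard
  · have hs : ∑ i ∈ s, w i • v i = ∑ i ∈ s, v i :=
      sum_congr rfl fun i hi => by rw [hws i hi, one_smul]
    have ht : ∑ i ∈ t, w i • v i = -∑ i ∈ t, v i := by
      rw [← sum_neg_distrib]
      exact sum_congr rfl fun i hi => by rw [hwt i hi, neg_one_smul]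
    rw [sum_union hst, hs, ht, ← sub_eq_add_neg, hv]

end AffineSpan

theorem root_polytope_dim_of_not_coEulerian_general
    {k n : Type*} [Fintype k] [Fintype n] [DecidableEq n]
    (A : Matrix k n ℝ) (r : ℕ) (hr : A.rank = r)
    (hnc : ∃ Cp Cm : Finset n, A.IsSignedCircuit Cp Cm ∧ Cp.card ≠ Cm.card) :
    Module.finrank ℝ (affineSpan ℝ (Set.range A.transpose)).direction = r := by
  obtain ⟨Cp, Cm, ⟨hdisj, -, hrel⟩, hcard⟩ := hnc
  have h0 := zero_mem_affineSpan_of_sum_sub_sum_eq_zero (k := ℝ) hdisj hcard hrel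
  rw [direction_affineSpan_eq_span_of_zero_mem h0, ← hr,
    Matrix.rank_eq_finrank_span_cols]
  rfl

/-- If `A` is totally unimodular of rank `r` and some signed circuit
`C = C⁺ ⊔ C⁻` has `|C⁺| ≠ |C⁻|`, then the root polytope `conv{a_1,…,a_m}` has affine
dimension `r`. -/
theorem root_polytope_dim_of_not_coEulerian
    {k n : Type*} [Fintype k] [Fintype n] [DecidableEq n]
    (A : Matrix k n ℝ) (hA : A.IsTotallyUnimodular) (r : ℕ) (hr : A.rank = r)
    (hnc : ∃ Cp Cm : Finset n, A.IsSignedCircuit Cp Cm ∧ Cp.card ≠ Cm.card) :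
    Module.finrank ℝ (affineSpan ℝ (Set.range A.transpose)).direction = r :=
  root_polytope_dim_of_not_coEulerian_general A r hr hnc
end

section
/- Let A be a totally unimodular matrix representing a co-Eulerian regular oriented matroid of rank r, and let B = {i_1,...,i_r} be a basis (a maximal linearly independent set of columns). Then the simplex conv{a_{i_1},...,a_{i_r}} is unimodular: the vectors a_{i_1} - a_{i_r}, ..., a_{i_{r-1}} - a_{i_r} generate as an integer lattice every integer point in their real linear span. -/
/-! Write an integer point `p` of the real span of the differences `a_i - a_e` as `∑ d_i a_i`
with `∑ d_i = 0`; it suffices to show that the `d_i` are integers. The columns indexed by `B`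
are independent, so some square submatrix `N` of them is invertible, and total unimodularity
forces `det N = ±1`. Hence `N` has an integer inverse and `d = N⁻¹ (p restricted to the rows
of N)` is integral. -/

open Finset

theorem Submodule.mem_span_range_sub_iff {R V ι : Type*} [Ring R] [AddCommGroup V] [Module R V]
    [Fintype ι] [DecidableEq ι] (a : ι → V) (e : ι) (v : V) :
    v ∈ Submodule.span R (Set.range fun i => a i - a e) ↔
      ∃ d : ι → R, ∑ i, d i = 0 ∧ ∑ i, d i • a i = v := by
  have combination (d : ι → R) :
      ∑ i, d i • (a i - a e) = ∑ i, d i • a i - (∑ i, d i) • a e := by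
    simp only [smul_sub, Finset.sum_sub_distrib, Finset.sum_smul]
  rw [Submodule.mem_span_range_iff_exists_fun]
  constructor
  · rintro ⟨c, rfl⟩
    refine ⟨c - Pi.single e (∑ i, c i), by simp [Finset.sum_sub_distrib], ?_⟩
    simp [sub_smul, Finset.sum_sub_distrib, combination]
  · rintro ⟨d, hd, rfl⟩
    exact ⟨d, by rw [combination, hd, zero_smul, sub_zero]⟩

namespace Matrix

theorem exists_isUnit_submatrix_of_linearIndependent_col_s10 {K m ι : Type*} [Field K]
    [Fintype m] [Fintype ι] [DecidableEq ι] {M : Matrix m ι K} (hM : LinearIndependent K M.col) :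
    ∃ f : ι → m, IsUnit (M.submatrix f id) := by
  obtain ⟨κ, a, -, hspan, hli⟩ := exists_linearIndependent' K M.row
  have htop : Submodule.span K (Set.range M.row) = ⊤ := by
    apply Submodule.eq_top_of_finrank_eq
    rw [← rank_eq_finrank_span_row, ← rank_transpose, hM.rank_matrix,
      Module.finrank_fintype_fun_eq_card]
  let b : Module.Basis κ K (ι → K) := .mk hli (by rw [hspan, htop])
  let φ := (Pi.basisFun K ι).indexEquiv b
  exact ⟨a ∘ φ, linearIndependent_rows_iff_isUnit.1 (hli.comp φ φ.injective)⟩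

theorem IsTotallyUnimodular.exists_eq_map_intCast {R m n : Type*} [CommRing R]
    {A : Matrix m n R} (hA : A.IsTotallyUnimodular) :
    ∃ Az : Matrix m n ℤ, Az.map (Int.cast : ℤ → R) = A := by
  choose s hs using hA.apply
  exact ⟨of fun i j => s i j, by ext i j; simp [← hs, SignType.intCast_cast]⟩

theorem IsTotallyUnimodular.exists_intCast_eq_of_isUnit {R ι : Type*} [CommRing R] [CharZero R]
    [Fintype ι] [DecidableEq ι] {N : Matrix ι ι R} (hN : N.IsTotallyUnimodular)
    (hunit : IsUnit N) {d : ι → R} {q : ι → ℤ} (h : N *ᵥ d = fun i => (q i : R)) :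
    ∃ z : ι → ℤ, d = fun i => (z i : R) := by
  obtain ⟨Nz, rfl⟩ := hN.exists_eq_map_intCast
  have hdet : IsUnit Nz.det := by
    obtain ⟨s, hs⟩ := (isTotallyUnimodular_iff_fintype _).1 hN ι id id
    have hcast : ((Nz.det : ℤ) : R) = s := by
      rw [hs, submatrix_id_id]
      exact (Int.castRingHom R).map_det Nz
    have hne : (s : R) ≠ 0 := by
      rw [hs, submatrix_id_id]
      exact ((isUnit_iff_isUnit_det _).1 hunit).ne_zero
    cases s with
    | zero => exact absurd rfl hne
    | pos => exact Int.isUnit_iff.2 (.inl (by exact_mod_cast hcast))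
    | neg => exact Int.isUnit_iff.2 (.inr (by exact_mod_cast hcast))
  refine ⟨Nz⁻¹ *ᵥ q, mulVec_injective_of_isUnit hunit (h.trans ?_)⟩
  funext i
  have hmap := (Int.castRingHom R).map_mulVec Nz (Nz⁻¹ *ᵥ q) i
  rw [mulVec_mulVec, mul_nonsing_inv _ hdet, one_mulVec] at hmap
  exact hmap

theorem IsTotallyUnimodular.exists_intCast_eq_of_linearIndependent_col {K m ι : Type*} [Field K]
    [CharZero K] [Fintype m] [Fintype ι] [DecidableEq ι] {M : Matrix m ι K}
    (hM : M.IsTotallyUnimodular) (hcol : LinearIndependent K M.col)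
    {d : ι → K} {p : m → ℤ} (h : M *ᵥ d = fun j => (p j : K)) :
    ∃ z : ι → ℤ, d = fun i => (z i : K) := by
  obtain ⟨f, hf⟩ := exists_isUnit_submatrix_of_linearIndependent_col_s10 hcol
  exact (hM.submatrix f id).exists_intCast_eq_of_isUnit hf (q := p ∘ f)
    (funext fun i => congrFun h (f i))

end Matrix

theorem basis_simplex_unimodular_general
    {k n : Type*} [Fintype k] [DecidableEq n]
    (A : Matrix k n ℝ) (hA : A.IsTotallyUnimodular)
    (B : Finset n) (hBind : LinearIndependent ℝ (fun i : B => A.transpose i.1)) :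
    ∀ e ∈ B, ∀ p : k → ℤ,
      (fun j => (p j : ℝ)) ∈
        Submodule.span ℝ {v : k → ℝ | ∃ i ∈ B, v = A.transpose i - A.transpose e} →
      (fun j => (p j : ℝ)) ∈
        Submodule.span ℤ {v : k → ℝ | ∃ i ∈ B, v = A.transpose i - A.transpose e} := by
  intro e he p hp
  let M : Matrix k B ℝ := A.submatrix id Subtype.val
  have hrange : {v : k → ℝ | ∃ i ∈ B, v = A.transpose i - A.transpose e} =
      Set.range fun i : B => M.col i - M.col ⟨e, he⟩ := by
    ext v
    constructor
    · rintro ⟨i, hi, rfl⟩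
      exact ⟨⟨i, hi⟩, rfl⟩
    · rintro ⟨i, rfl⟩
      exact ⟨i, i.2, rfl⟩
  rw [hrange, Submodule.mem_span_range_sub_iff] at hp ⊢
  obtain ⟨d, hd_sum, hd_comb⟩ := hp
  have hMd : M.mulVec d = fun j => (p j : ℝ) := by
    rw [Matrix.mulVec_eq_sum]
    simp only [op_smul_eq_smul]
    exact hd_comb
  obtain ⟨z, rfl⟩ :=
    (hA.submatrix id Subtype.val).exists_intCast_eq_of_linearIndependent_col hBind hMd
  refine ⟨z, Int.cast_injective (α := ℝ) (by push_cast; exact hd_sum), ?_⟩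
  rw [← hd_comb]
  simp [Int.cast_smul_eq_zsmul]

/-- Let `A` be totally unimodular representing a co-Eulerian regular
oriented matroid of rank `r`, and let `B` be a basis (a maximal linearly independent set
of columns, i.e. an independent set of size `r`). Then the simplex on the columns of `B`
is unimodular: for a vertex `a_e` (`e ∈ B`), the differences `a_i - a_e` (`i ∈ B`)
generate over `ℤ` every integer point of their real linear span. -/
theorem basis_simplex_unimodular
    {k n : Type*} [Fintype k] [Fintype n] [DecidableEq n]
    (A : Matrix k n ℝ) (hA : A.IsTotallyUnimodular)
    (hco : ∀ Cp Cm : Finset n, A.IsSignedCircuit Cp Cm → Cp.card = Cm.card)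
    (B : Finset n) (hBind : LinearIndependent ℝ (fun i : B => A.transpose i.1))
    (hBcard : B.card = A.rank) :
    ∀ e ∈ B, ∀ p : k → ℤ,
      (fun j => (p j : ℝ)) ∈
        Submodule.span ℝ {v : k → ℝ | ∃ i ∈ B, v = A.transpose i - A.transpose e} →
      (fun j => (p j : ℝ)) ∈
        Submodule.span ℤ {v : k → ℝ | ∃ i ∈ B, v = A.transpose i - A.transpose e} :=
  basis_simplex_unimodular_general A hA B hBind
end

section
/- Suppose a signed circuit C = C^+ ⊔ C^- of a co-Eulerian totally unimodular matrix A satisfies C^+ ⊆ B_1 and C^- ⊆ B_2 for bases B_1, B_2. Then the point p = (1/|C^+|) sum_{i∈C^+} a_i = (1/|C^-|) sum_{i∈C^-} a_i lies in both simplices conv{a_i : i∈B_1} and conv{a_i : i∈B_2}, but the minimal face of the first simplex containing p is conv{a_i : i∈C^+} and the minimal face of the second containing p is conv{a_i : i∈C^-}, which are disjoint simplices. -/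
open Finset

/-! The centroid `p` of `C⁺` is also the centroid of `C⁻`, since `|C⁺| = |C⁻|`. The columns of a
basis are linearly independent, so a point of their span has unique coordinates; those of `p`
are nonzero exactly on `C⁺`, hence a face `conv {a_i : i ∈ S}` with `S ⊆ B₁` can contain `p` only
if `C⁺ ⊆ S`. -/

section

variable {𝕜 R ι E : Type*}

lemma Finset.inv_card_smul_sum_mem_convexHull [Field 𝕜] [LinearOrder 𝕜] [IsStrictOrderedRing 𝕜]
    [AddCommGroup E] [Module 𝕜 E] (v : ι → E) {C : Finset ι} (hC : C.Nonempty) :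
    (#C : 𝕜)⁻¹ • ∑ i ∈ C, v i ∈ convexHull 𝕜 (v '' C) := by
  have h := C.centerMass_mem_convexHull (w := fun _ => (1 : 𝕜)) (z := v)
    (fun _ _ => zero_le_one) (by simpa using hC.card_pos) (fun _ hi => Set.mem_image_of_mem _ hi)
  simpa [Finset.centerMass] using h

lemma LinearIndepOn.subset_of_smul_sum_mem_span [Ring R] [AddCommGroup E]
    [Module R E] {v : ι → E} {B C S : Finset ι} (hB : LinearIndepOn R v B) (hCB : C ⊆ B)
    (hSB : S ⊆ B) {c : R} (hc : c ≠ 0) (hmem : c • ∑ i ∈ C, v i ∈ Submodule.span R (v '' S)) :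
    C ⊆ S := by
  classical
  intro i hiC
  by_contra hiS
  set V := Submodule.span R (v '' (↑B \ {i}))
  have hS : c • ∑ j ∈ C, v j ∈ V :=
    Submodule.span_mono (Set.image_mono fun j (hj : j ∈ S) =>
      Set.mem_sdiff_singleton.mpr ⟨hSB hj, by rintro rfl; exact hiS hj⟩) hmem
  have hC : c • ∑ j ∈ C.erase i, v j ∈ V :=
    V.smul_mem c <| V.sum_mem fun j hj =>
      Submodule.subset_span ⟨j, ⟨hCB (mem_of_mem_erase hj), ne_of_mem_erase hj⟩, rfl⟩
  refine hc (hB.eq_zero_of_smul_mem_span (hCB hiC) c ?_)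
  rw [← add_sum_erase C v hiC, smul_add] at hS
  simpa using sub_mem hS hC

lemma LinearIndepOn.subset_of_inv_card_smul_sum_mem_convexHull [Field 𝕜]
    [LinearOrder 𝕜] [IsStrictOrderedRing 𝕜] [AddCommGroup E] [Module 𝕜 E] {v : ι → E}
    {B C S : Finset ι} (hB : LinearIndepOn 𝕜 v B) (hCB : C ⊆ B) (hC : C.Nonempty) (hSB : S ⊆ B)
    (hmem : (#C : 𝕜)⁻¹ • ∑ i ∈ C, v i ∈ convexHull 𝕜 (v '' S)) : C ⊆ S :=
  hB.subset_of_smul_sum_mem_span hCB hSB (by simpa using hC.ne_empty)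
    (convexHull_min Submodule.subset_span (Submodule.convex _) hmem)

end

lemma Matrix.IsCircuit.nonempty_s12 {m n : Type*} {A : Matrix m n ℝ} {C : Finset n}
    (hC : A.IsCircuit C) : C.Nonempty := by
  rw [nonempty_iff_ne_empty]
  rintro rfl
  exact hC.1 linearIndependent_empty_type

theorem signed_circuit_gives_conflicting_minimal_faces_general
    {k n : Type*} [Fintype k] [DecidableEq n]
    (A : Matrix k n ℝ)
    (hco : ∀ Cp Cm : Finset n, A.IsSignedCircuit Cp Cm → Cp.card = Cm.card)
    (B₁ B₂ Cp Cm : Finset n)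
    (hB₁ : LinearIndependent ℝ (fun i : B₁ => A.transpose i.1))
    (hB₂ : LinearIndependent ℝ (fun i : B₂ => A.transpose i.1))
    (hC : A.IsSignedCircuit Cp Cm) (hCp : Cp ⊆ B₁) (hCm : Cm ⊆ B₂) :
    ((Cp.card : ℝ)⁻¹ • ∑ i ∈ Cp, A.transpose i) =
        ((Cm.card : ℝ)⁻¹ • ∑ i ∈ Cm, A.transpose i) ∧
    (let p := (Cp.card : ℝ)⁻¹ • ∑ i ∈ Cp, A.transpose i
     p ∈ convexHull ℝ (A.transpose '' B₁) ∧
     p ∈ convexHull ℝ (A.transpose '' B₂) ∧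
     p ∈ convexHull ℝ (A.transpose '' Cp) ∧
     p ∈ convexHull ℝ (A.transpose '' Cm) ∧
     (∀ S ⊆ B₁, p ∈ convexHull ℝ (A.transpose '' S) → Cp ⊆ S) ∧
     (∀ S ⊆ B₂, p ∈ convexHull ℝ (A.transpose '' S) → Cm ⊆ S) ∧
     Disjoint Cp Cm) := by
  obtain ⟨hdisj, hcirc, hsum⟩ := hC
  have hcard : #Cp = #Cm := hco Cp Cm ⟨hdisj, hcirc, hsum⟩
  have hp : (#Cp : ℝ)⁻¹ • ∑ i ∈ Cp, A.transpose i = (#Cm : ℝ)⁻¹ • ∑ i ∈ Cm, A.transpose i := by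
    rw [hcard, sub_eq_zero.mp hsum]
  have hCp_ne : Cp.Nonempty := by
    have hpos : 0 < #Cp + #Cm := card_union_of_disjoint hdisj ▸ hcirc.nonempty_s12.card_pos
    exact card_pos.mp (by omega)
  have hCm_ne : Cm.Nonempty := card_pos.mp (hcard ▸ hCp_ne.card_pos)
  have hp_Cp := inv_card_smul_sum_mem_convexHull (𝕜 := ℝ) A.transpose hCp_ne
  have hp_Cm := hp ▸ inv_card_smul_sum_mem_convexHull (𝕜 := ℝ) A.transpose hCm_ne
  refine ⟨hp, convexHull_mono (Set.image_mono (coe_subset.mpr hCp)) hp_Cp,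
    convexHull_mono (Set.image_mono (coe_subset.mpr hCm)) hp_Cm, hp_Cp, hp_Cm,
    fun S hS hpS => ?_, fun S hS hpS => ?_, hdisj⟩
  · exact LinearIndepOn.subset_of_inv_card_smul_sum_mem_convexHull hB₁ hCp hCp_ne hS hpS
  · exact LinearIndepOn.subset_of_inv_card_smul_sum_mem_convexHull hB₂ hCm hCm_ne hS (hp ▸ hpS)

/-- Suppose a signed circuit `C = C⁺ ⊔ C⁻` of a co-Eulerian totally
unimodular matrix `A` satisfies `C⁺ ⊆ B₁`, `C⁻ ⊆ B₂` for bases `B₁, B₂`. Then the point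
`p = (1/|C⁺|) ∑_{i∈C⁺} a_i = (1/|C⁻|) ∑_{i∈C⁻} a_i` lies in both simplices
`conv{a_i : i ∈ B₁}` and `conv{a_i : i ∈ B₂}`; the minimal face of the first simplex
containing `p` is `conv{a_i : i ∈ C⁺}` and that of the second is `conv{a_i : i ∈ C⁻}`,
and these are simplices on disjoint vertex sets. -/
theorem signed_circuit_gives_conflicting_minimal_faces
    {k n : Type*} [Fintype k] [Fintype n] [DecidableEq n]
    (A : Matrix k n ℝ) (hA : A.IsTotallyUnimodular)
    (hco : ∀ Cp Cm : Finset n, A.IsSignedCircuit Cp Cm → Cp.card = Cm.card)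
    (B₁ B₂ Cp Cm : Finset n)
    (hB₁ : LinearIndependent ℝ (fun i : B₁ => A.transpose i.1)) (hB₁c : B₁.card = A.rank)
    (hB₂ : LinearIndependent ℝ (fun i : B₂ => A.transpose i.1)) (hB₂c : B₂.card = A.rank)
    (hC : A.IsSignedCircuit Cp Cm) (hCp : Cp ⊆ B₁) (hCm : Cm ⊆ B₂) :
    ((Cp.card : ℝ)⁻¹ • ∑ i ∈ Cp, A.transpose i) =
        ((Cm.card : ℝ)⁻¹ • ∑ i ∈ Cm, A.transpose i) ∧
    (let p := (Cp.card : ℝ)⁻¹ • ∑ i ∈ Cp, A.transpose i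
     p ∈ convexHull ℝ (A.transpose '' B₁) ∧
     p ∈ convexHull ℝ (A.transpose '' B₂) ∧
     p ∈ convexHull ℝ (A.transpose '' Cp) ∧
     p ∈ convexHull ℝ (A.transpose '' Cm) ∧
     (∀ S ⊆ B₁, p ∈ convexHull ℝ (A.transpose '' S) → Cp ⊆ S) ∧
     (∀ S ⊆ B₂, p ∈ convexHull ℝ (A.transpose '' S) → Cm ⊆ S) ∧
     Disjoint Cp Cm) :=
  signed_circuit_gives_conflicting_minimal_faces_general A hco B₁ B₂ Cp Cm hB₁ hB₂ hC hCp hCm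
end

section
/- Let G be a connected Eulerian digraph and v_0, v_1 any two vertices. Then the greedoid polynomial of the directed branching greedoid of G rooted at v_0 equals the greedoid polynomial of the directed branching greedoid of G rooted at v_1. -/
open Finset

section

variable {V E : Type*}

/-- Reachability from `u` to `v` using directed edges from the edge set `F`. -/
def ReachableIn [Fintype E] (tail head : E → V) (F : Finset E) (u v : V) : Prop :=
  Relation.ReflTransGen (fun a b => ∃ e ∈ F, tail e = a ∧ head e = b) u v

/-- `F` is a spanning arborescence rooted at `v₀`. -/
def IsArborescence [Fintype V] [Fintype E] (tail head : E → V) (F : Finset E) (v₀ : V) :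
    Prop :=
  (∀ v : V, ReachableIn tail head F v₀ v) ∧ F.card + 1 = Fintype.card V

open Classical in
/-- The greedoid polynomial of the directed branching greedoid of the digraph
`(tail, head)` rooted at `v₀`, evaluated at `x`: the `h`-polynomial `f(x-1)` of the dual
complex, whose faces are the subsets of `E` disjoint from some spanning arborescence
rooted at `v₀`. -/
noncomputable def greedoidPolyEval [Fintype V] [Fintype E]
    (tail head : E → V) (v₀ : V) (x : ℝ) : ℝ :=
  ∑ X ∈ Finset.univ.filter
      (fun X : Finset E => ∃ F : Finset E, IsArborescence tail head F v₀ ∧ Disjoint X F),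
    (x - 1) ^ (Fintype.card E + 1 - Fintype.card V - X.card)

/-!
The greedoid polynomial rooted at `v` is determined by the numbers of edge sets of each size
that contain a spanning arborescence rooted at `v`, so it suffices to show that these numbers do
not depend on `v`. Over the ordered set partitions `(B₀, …, Bₖ)` of the vertices with `v ∈ B₀`
such that no edge of `Y` goes up, the sum of `(-1)ᵏ` is `1` if every vertex is reachable from
`v` along `Y` and `0` otherwise (a sign-reversing involution merges or splits `B₀`). Summing over
`Y` expresses the numbers through the partitions and their counts of non-ascending edges. In an
Eulerian digraph every cut is crossed equally often in both directions, so shifting the blocks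
cyclically until the block of `v₁` comes first is a bijection from the partitions rooted at `v₀`
to those rooted at `v₁` that preserves `k` and the number of non-ascending edges.
-/

namespace ReachableIn

variable [Fintype E] {tail head : E → V} {Y : Finset E} {u w : V}

theorem mono {Z : Finset E} (h : ReachableIn tail head Y u w) (hYZ : Y ⊆ Z) :
    ReachableIn tail head Z u w :=
  Relation.ReflTransGen.mono (fun _ _ ⟨e, he, hte, hhe⟩ => ⟨e, hYZ he, hte, hhe⟩) _ _ h

theorem mem_of_forall_mem {S : Set V} (h : ReachableIn tail head Y u w)
    (hS : ∀ e ∈ Y, tail e ∈ S → head e ∈ S) (hu : u ∈ S) : w ∈ S := by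
  induction h with
  | refl => exact hu
  | tail _ hstep ih =>
    obtain ⟨e, he, rfl, rfl⟩ := hstep
    exact hS e he ih

theorem exists_mem_leaving {S : Set V} (h : ReachableIn tail head Y u w) (hu : u ∈ S)
    (hw : w ∉ S) : ∃ e ∈ Y, tail e ∈ S ∧ head e ∉ S := by
  by_contra! hS
  exact hw (h.mem_of_forall_mem hS hu)

@[simp]
theorem refl : ReachableIn tail head Y u u :=
  Relation.ReflTransGen.refl

theorem apply_le {α : Type*} [Preorder α] {f : V → α} (h : ReachableIn tail head Y u w)
    (hf : ∀ e ∈ Y, f (head e) ≤ f (tail e)) : f w ≤ f u :=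
  h.mem_of_forall_mem (S := {x | f x ≤ f u}) (fun e he hte => (hf e he).trans hte) le_rfl

end ReachableIn

namespace BranchingGreedoid

open scoped Classical

variable {tail head : E → V}

section Spanning

variable [Fintype V] [Fintype E]

def Spans (tail head : E → V) (Y : Finset E) (v : V) : Prop :=
  ∀ w, ReachableIn tail head Y v w

theorem Spans.exists_isArborescence_subset {Y : Finset E} {v : V}
    (hY : Spans tail head Y v) : ∃ F ⊆ Y, IsArborescence tail head F v := by
  -- Grow a tree `F` on a vertex set `T` one leaving edge at a time.
  have grow : ∀ k < Fintype.card V, ∃ T : Finset V, ∃ F ⊆ Y, v ∈ T ∧ #T = k + 1 ∧ #F = k ∧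
      (∀ w ∈ T, ReachableIn tail head F v w) ∧ ∀ e ∈ F, head e ∈ T := by
    intro k
    induction k with
    | zero =>
      exact fun _ => ⟨{v}, ∅, empty_subset _, mem_singleton_self v, rfl, rfl,
        fun w hw => mem_singleton.1 hw ▸ ReachableIn.refl, by simp⟩
    | succ k ih =>
      intro hk
      obtain ⟨T, F, hFY, hvT, hT, hF, hreach, hhead⟩ := ih (by omega)
      obtain ⟨w, -, hw⟩ := exists_mem_notMem_of_card_lt_card (s := T) (t := univ)
        (by rw [hT, card_univ]; omega)
      obtain ⟨e, heY, hte, hhe⟩ := (hY w).exists_mem_leaving (S := {x | x ∈ T}) hvT hw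
      have heF : e ∉ F := fun he => hhe (hhead e he)
      refine ⟨insert (head e) T, insert e F, insert_subset heY hFY, mem_insert_of_mem hvT,
        by rw [card_insert_of_notMem hhe, hT], by rw [card_insert_of_notMem heF, hF], ?_, ?_⟩
      · intro x hx
        rcases mem_insert.1 hx with rfl | hx
        · exact ((hreach _ hte).mono (subset_insert e F)).tail ⟨e, mem_insert_self e F, rfl, rfl⟩
        · exact (hreach x hx).mono (subset_insert e F)
      · intro f hf
        rcases mem_insert.1 hf with rfl | hf
        · exact mem_insert_self _ T
        · exact mem_insert_of_mem (hhead f hf)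
  have hV : 0 < Fintype.card V := Fintype.card_pos_iff.2 ⟨v⟩
  obtain ⟨T, F, hFY, -, hT, hF, hreach, -⟩ := grow (Fintype.card V - 1) (by omega)
  have hTuniv : T = univ := eq_univ_of_card T (by omega)
  exact ⟨F, hFY, fun w => hreach w (hTuniv ▸ mem_univ w), by omega⟩

theorem exists_isArborescence_disjoint_iff {X : Finset E} {v : V} :
    (∃ F, IsArborescence tail head F v ∧ Disjoint X F) ↔ Spans tail head Xᶜ v := by
  simp_rw [disjoint_comm (a := X), ← subset_compl_iff_disjoint_right]
  constructor
  · rintro ⟨F, hF, hFX⟩ w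
    exact (hF.1 w).mono hFX
  · intro hX
    obtain ⟨F, hFX, hF⟩ := hX.exists_isArborescence_subset
    exact ⟨F, hF, hFX⟩

theorem greedoidPolyEval_eq_sum_spans (v : V) (x : ℝ) :
    greedoidPolyEval tail head v x = ∑ Y ∈ univ.filter (Spans tail head · v),
      (x - 1) ^ (Fintype.card E + 1 - Fintype.card V - (Fintype.card E - #Y)) := by
  refine (sum_nbij' compl compl ?_ ?_ (fun Y _ => compl_compl Y) (fun X _ => compl_compl X)
    fun Y _ => by rw [card_compl]).symm
  · simp [exists_isArborescence_disjoint_iff]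
  · simp [exists_isArborescence_disjoint_iff]

end Spanning

section Levelings

variable [Fintype V]

def topLevel (ℓ : V → ℕ) : ℕ := univ.sup ℓ

/-- A leveling rooted at `v` encodes an ordered set partition `(B₀, …, Bₖ)` of `V` with
`v ∈ B₀`, as `Bⱼ = ℓ⁻¹ {j}` and `k = topLevel ℓ`. -/
noncomputable def levelings (v : V) : Finset (V → ℕ) :=
  (Fintype.piFinset fun _ => range (Fintype.card V)).filter
    fun ℓ => ℓ v = 0 ∧ ∀ j ≤ topLevel ℓ, ∃ u, ℓ u = j

theorem le_topLevel (ℓ : V → ℕ) (u : V) : ℓ u ≤ topLevel ℓ :=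
  le_sup (mem_univ u)

theorem topLevel_zero : topLevel (0 : V → ℕ) = 0 :=
  Nat.le_zero.1 (Finset.sup_le fun _ _ => le_rfl)

theorem lt_card_of_forall_le_exists {α : Type*} [Fintype α] {f : α → ℕ} {M : ℕ}
    (hf : ∀ j ≤ M, ∃ a, f a = j) : M < Fintype.card α := by
  have := card_le_card_of_surjOn f (s := univ) (t := range (M + 1)) fun j hj => by
    obtain ⟨a, ha⟩ := hf j (Nat.lt_succ_iff.1 (mem_range.1 hj))
    exact ⟨a, mem_coe.2 (mem_univ a), ha⟩
  simpa using this

theorem mem_levelings_of {v : V} {ℓ : V → ℕ} {M : ℕ} (hv : ℓ v = 0) (hle : ∀ u, ℓ u ≤ M)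
    (hsurj : ∀ j ≤ M, ∃ u, ℓ u = j) : ℓ ∈ levelings v ∧ topLevel ℓ = M := by
  have htop : topLevel ℓ = M := by
    obtain ⟨u, hu⟩ := hsurj M le_rfl
    exact le_antisymm (Finset.sup_le fun u _ => hle u) (hu ▸ le_topLevel ℓ u)
  have hM := lt_card_of_forall_le_exists hsurj
  refine ⟨mem_filter.2 ⟨Fintype.mem_piFinset.2 fun u => mem_range.2 ?_, hv, htop ▸ hsurj⟩, htop⟩
  exact (hle u).trans_lt hM

theorem mem_levelings {v : V} {ℓ : V → ℕ} :
    ℓ ∈ levelings v ↔ ℓ v = 0 ∧ ∀ j ≤ topLevel ℓ, ∃ u, ℓ u = j :=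
  ⟨fun h => (mem_filter.1 h).2, fun ⟨hv, hsurj⟩ => (mem_levelings_of hv (le_topLevel ℓ) hsurj).1⟩

end Levelings

def mergeBottom (ℓ : V → ℕ) : V → ℕ := fun u => ℓ u - 1

noncomputable def splitBottom (p : V → Prop) (ℓ : V → ℕ) : V → ℕ :=
  fun u => if p u then 0 else ℓ u + 1

theorem splitBottom_mergeBottom {p : V → Prop} {ℓ : V → ℕ} (hp : ∀ u, p u → ℓ u = 0)
    (hzero : ∀ u, ℓ u = 0 → p u) : splitBottom p (mergeBottom ℓ) = ℓ := by
  funext u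
  by_cases hu : p u
  · simp [splitBottom, hu, hp u hu]
  · have := mt (hzero u) hu
    simp only [splitBottom, mergeBottom, hu, if_false]
    omega

theorem mergeBottom_splitBottom {p : V → Prop} {ℓ : V → ℕ} (hp : ∀ u, p u → ℓ u = 0) :
    mergeBottom (splitBottom p ℓ) = ℓ := by
  funext u
  by_cases hu : p u <;> simp [splitBottom, mergeBottom, hu, hp u]

section SignedSum

variable [Fintype V] [Fintype E] {R : Type*} [CommRing R] {v : V} {Y : Finset E} {ℓ : V → ℕ}

def descendingEdges (tail head : E → V) (ℓ : V → ℕ) : Finset E :=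
  univ.filter fun e => ℓ (head e) ≤ ℓ (tail e)

noncomputable def compatibleLevelings (tail head : E → V) (v : V) (Y : Finset E) :
    Finset (V → ℕ) :=
  (levelings v).filter (Y ⊆ descendingEdges tail head ·)

theorem mem_compatibleLevelings : ℓ ∈ compatibleLevelings tail head v Y ↔
    ℓ ∈ levelings v ∧ ∀ e ∈ Y, ℓ (head e) ≤ ℓ (tail e) := by
  simp [compatibleLevelings, descendingEdges, subset_iff]

theorem eq_zero_of_mem_compatibleLevelings (hℓ : ℓ ∈ compatibleLevelings tail head v Y) {u : V}
    (hu : ReachableIn tail head Y v u) : ℓ u = 0 := by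
  obtain ⟨hℓ, hdesc⟩ := mem_compatibleLevelings.1 hℓ
  simpa [(mem_levelings.1 hℓ).1] using hu.apply_le hdesc

theorem compatibleLevelings_of_spans (hY : Spans tail head Y v) :
    compatibleLevelings tail head v Y = {0} := by
  ext ℓ
  rw [mem_singleton]
  refine ⟨fun hℓ => funext fun u => eq_zero_of_mem_compatibleLevelings hℓ (hY u), ?_⟩
  rintro rfl
  refine mem_compatibleLevelings.2 ⟨?_, fun _ _ => le_rfl⟩
  exact (mem_levelings_of (ℓ := 0) (M := 0) rfl (fun _ => le_rfl)
    fun j hj => ⟨v, by simp; omega⟩).1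

theorem mergeBottom_mem (hY : ¬Spans tail head Y v) (hℓ : ℓ ∈ compatibleLevelings tail head v Y)
    (hzero : ∀ u, ℓ u = 0 → ReachableIn tail head Y v u) :
    mergeBottom ℓ ∈ compatibleLevelings tail head v Y ∧
      topLevel (mergeBottom ℓ) + 1 = topLevel ℓ ∧
      ∃ u, mergeBottom ℓ u = 0 ∧ ¬ReachableIn tail head Y v u := by
  obtain ⟨hlev, hdesc⟩ := mem_compatibleLevelings.1 hℓ
  obtain ⟨hv, hsurj⟩ := mem_levelings.1 hlev
  obtain ⟨w, hw⟩ : ∃ w, ¬ReachableIn tail head Y v w := by simpa [Spans] using hY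
  have hM : 1 ≤ topLevel ℓ := by
    have := le_topLevel ℓ w
    have := mt (hzero w) hw
    omega
  obtain ⟨hmem, htop⟩ := mem_levelings_of (v := v) (M := topLevel ℓ - 1) (ℓ := mergeBottom ℓ)
    (by simp [mergeBottom, hv]) (fun u => Nat.sub_le_sub_right (le_topLevel ℓ u) 1)
    fun j hj => by
      obtain ⟨u, hu⟩ := hsurj (j + 1) (by omega)
      exact ⟨u, by simp [mergeBottom, hu]⟩
  obtain ⟨u, hu⟩ := hsurj 1 hM
  refine ⟨mem_compatibleLevelings.2 ⟨hmem, fun e he => Nat.sub_le_sub_right (hdesc e he) 1⟩,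
    by omega, u, by simp [mergeBottom, hu], fun h => ?_⟩
  simp [eq_zero_of_mem_compatibleLevelings hℓ h] at hu

theorem splitBottom_mem (hℓ : ℓ ∈ compatibleLevelings tail head v Y) {u₀ : V} (hu₀ : ℓ u₀ = 0)
    (hu₀Y : ¬ReachableIn tail head Y v u₀) :
    splitBottom (ReachableIn tail head Y v) ℓ ∈ compatibleLevelings tail head v Y ∧
      topLevel (splitBottom (ReachableIn tail head Y v) ℓ) = topLevel ℓ + 1 ∧
      ∀ u, splitBottom (ReachableIn tail head Y v) ℓ u = 0 → ReachableIn tail head Y v u := by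
  obtain ⟨hlev, hdesc⟩ := mem_compatibleLevelings.1 hℓ
  obtain ⟨-, hsurj⟩ := mem_levelings.1 hlev
  obtain ⟨hmem, htop⟩ := mem_levelings_of (v := v) (M := topLevel ℓ + 1)
    (ℓ := splitBottom (ReachableIn tail head Y v) ℓ)
    (by simp [splitBottom])
    (fun u => by
      have := le_topLevel ℓ u
      unfold splitBottom
      split_ifs <;> omega)
    fun j hj => by
      rcases j with _ | j
      · exact ⟨v, by simp [splitBottom]⟩
      obtain ⟨u, hu⟩ := hsurj j (by omega)
      by_cases huY : ReachableIn tail head Y v u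
      · have : j = 0 := hu ▸ eq_zero_of_mem_compatibleLevelings hℓ huY
        exact ⟨u₀, by simp [splitBottom, hu₀Y, hu₀, this]⟩
      · exact ⟨u, by simp [splitBottom, huY, hu]⟩
  refine ⟨mem_compatibleLevelings.2 ⟨hmem, fun e he => ?_⟩, htop, fun u hu => ?_⟩
  · by_cases ht : ReachableIn tail head Y v (tail e)
    · have hh : ReachableIn tail head Y v (head e) := ht.tail ⟨e, he, rfl, rfl⟩
      simp [splitBottom, ht, hh]
    · have := hdesc e he
      simp only [splitBottom, ht, if_false]
      split_ifs <;> omega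
  · by_contra h
    simp [splitBottom, h] at hu

/-- `mergeBottom` and `splitBottom` form a sign-reversing involution on the levelings whose
bottom block is, respectively is not, the set of vertices reachable from `v`. -/
theorem sum_compatibleLevelings_of_not_spans (hY : ¬Spans tail head Y v) :
    ∑ ℓ ∈ compatibleLevelings tail head v Y, (-1 : R) ^ topLevel ℓ = 0 := by
  set p := ReachableIn tail head Y v
  have hp : ∀ ℓ ∈ compatibleLevelings tail head v Y, ∀ u, p u → ℓ u = 0 :=
    fun ℓ hℓ u hu => eq_zero_of_mem_compatibleLevelings hℓ hu
  rw [← sum_filter_add_sum_filter_not _ (fun ℓ => ∀ u, ℓ u = 0 → p u), add_eq_zero_iff_eq_neg,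
    ← sum_neg_distrib]
  refine sum_nbij' mergeBottom (splitBottom p) ?_ ?_ ?_ ?_ ?_
  · intro ℓ hℓ
    obtain ⟨hℓ, hzero⟩ := mem_filter.1 hℓ
    obtain ⟨hmem, -, u, hu, hpu⟩ := mergeBottom_mem hY hℓ hzero
    exact mem_filter.2 ⟨hmem, fun h => hpu (h u hu)⟩
  · intro ℓ hℓ
    obtain ⟨hℓ, hzero⟩ := mem_filter.1 hℓ
    push Not at hzero
    obtain ⟨u, hu, hpu⟩ := hzero
    obtain ⟨hmem, -, hsplit⟩ := splitBottom_mem hℓ hu hpu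
    exact mem_filter.2 ⟨hmem, hsplit⟩
  · intro ℓ hℓ
    exact splitBottom_mergeBottom (hp ℓ (mem_filter.1 hℓ).1) (mem_filter.1 hℓ).2
  · intro ℓ hℓ
    exact mergeBottom_splitBottom (hp ℓ (mem_filter.1 hℓ).1)
  · intro ℓ hℓ
    obtain ⟨hℓ, hzero⟩ := mem_filter.1 hℓ
    rw [← (mergeBottom_mem hY hℓ hzero).2.1, pow_succ]
    ring

theorem sum_compatibleLevelings :
    ∑ ℓ ∈ compatibleLevelings tail head v Y, (-1 : R) ^ topLevel ℓ =
      if Spans tail head Y v then 1 else 0 := by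
  split_ifs with hY
  · simp [compatibleLevelings_of_spans hY, topLevel_zero]
  · exact sum_compatibleLevelings_of_not_spans hY

theorem sum_spans_eq_sum_levelings (f : ℕ → R) (v : V) :
    ∑ Y ∈ univ.filter (Spans tail head · v), f #Y =
      ∑ ℓ ∈ levelings v, (-1) ^ topLevel ℓ *
        ∑ Y ∈ (descendingEdges tail head ℓ).powerset, f #Y := by
  calc _ = ∑ Y, ∑ ℓ ∈ compatibleLevelings tail head v Y, (-1) ^ topLevel ℓ * f #Y := by
        rw [sum_filter]
        refine sum_congr rfl fun Y _ => ?_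
        rw [← sum_mul, sum_compatibleLevelings, ite_mul, one_mul, zero_mul]
    _ = ∑ ℓ ∈ levelings v, ∑ Y ∈ (descendingEdges tail head ℓ).powerset,
          (-1) ^ topLevel ℓ * f #Y :=
        sum_comm' fun Y ℓ => by simp [compatibleLevelings, and_comm]
    _ = _ := by simp_rw [mul_sum]

end SignedSum

section Eulerian

variable [Fintype E]

def IsEulerian (tail head : E → V) : Prop :=
  ∀ v, {e | head e = v}.ncard = {e | tail e = v}.ncard

theorem IsEulerian.card_leaving_eq_card_entering (hEul : IsEulerian tail head) (S : Finset V) :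
    #(univ.filter fun e => tail e ∈ S ∧ head e ∉ S) =
      #(univ.filter fun e => head e ∈ S ∧ tail e ∉ S) := by
  have hfiber (f : E → V) : #(univ.filter fun e => f e ∈ S) =
      ∑ u ∈ S, #(univ.filter fun e => f e = u) := by
    rw [card_eq_sum_card_fiberwise (f := f) (s := univ.filter fun e => f e ∈ S) (t := S)
      fun e he => (mem_filter.1 he).2]
    refine sum_congr rfl fun u hu => congr_arg card (ext fun e => ?_)
    simp only [mem_filter, mem_univ, true_and, and_iff_right_iff_imp]
    exact fun h => h ▸ hu
  have hdeg : #(univ.filter fun e => tail e ∈ S) = #(univ.filter fun e => head e ∈ S) := by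
    rw [hfiber, hfiber]
    exact sum_congr rfl fun u _ => by simpa [Set.ncard_eq_toFinset_card'] using (hEul u).symm
  have hedge (e : E) :
      (if tail e ∈ S then 1 else 0) + (if head e ∈ S ∧ tail e ∉ S then 1 else 0) =
        (if head e ∈ S then 1 else 0) + (if tail e ∈ S ∧ head e ∉ S then 1 else 0) := by
    split_ifs <;> tauto
  have := sum_congr rfl fun e (_ : e ∈ univ) => hedge e
  simp only [sum_add_distrib, ← card_filter] at this
  omega

end Eulerian

section Rotation

variable [Fintype V] [Fintype E] {R : Type*} [CommRing R]

/-- `rotate w ℓ` is `ℓ - ℓ w` modulo `topLevel ℓ + 1`: it shifts the blocks cyclically so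
that the block of `w` comes first. -/
def rotate (w : V) (ℓ : V → ℕ) : V → ℕ :=
  fun u => if ℓ w ≤ ℓ u then ℓ u - ℓ w else ℓ u + (topLevel ℓ + 1) - ℓ w

theorem rotate_mem_levelings {v : V} {ℓ : V → ℕ} (hℓ : ℓ ∈ levelings v) (w : V) :
    rotate w ℓ ∈ levelings w ∧ topLevel (rotate w ℓ) = topLevel ℓ := by
  obtain ⟨-, hsurj⟩ := mem_levelings.1 hℓ
  have hw := le_topLevel ℓ w
  refine mem_levelings_of (by simp [rotate]) (fun u => ?_) fun j hj => ?_
  · have := le_topLevel ℓ u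
    unfold rotate
    split_ifs <;> omega
  · by_cases hj' : j + ℓ w ≤ topLevel ℓ
    · obtain ⟨u, hu⟩ := hsurj _ hj'
      exact ⟨u, by simp only [rotate, hu]; split_ifs <;> omega⟩
    · obtain ⟨u, hu⟩ := hsurj (j + ℓ w - (topLevel ℓ + 1)) (by omega)
      exact ⟨u, by simp only [rotate, hu]; split_ifs <;> omega⟩

theorem rotate_rotate {v : V} {ℓ : V → ℕ} (hℓ : ℓ ∈ levelings v) (w : V) :
    rotate v (rotate w ℓ) = ℓ := by
  have hv := (mem_levelings.1 hℓ).1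
  have htop := (rotate_mem_levelings hℓ w).2
  funext u
  have := le_topLevel ℓ u
  have := le_topLevel ℓ w
  simp only [rotate, htop, hv]
  split_ifs <;> omega

theorem card_descendingEdges_rotate (hEul : IsEulerian tail head) (w : V) (ℓ : V → ℕ) :
    #(descendingEdges tail head (rotate w ℓ)) = #(descendingEdges tail head ℓ) := by
  set S := univ.filter fun u => ℓ u < ℓ w
  have hcut := hEul.card_leaving_eq_card_entering S
  -- Only edges crossing `S` change status: those entering `S` stop descending, those
  -- leaving it start.
  have hedge (e : E) :
      (if rotate w ℓ (head e) ≤ rotate w ℓ (tail e) then 1 else 0) +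
          (if head e ∈ S ∧ tail e ∉ S then 1 else 0) =
        (if ℓ (head e) ≤ ℓ (tail e) then 1 else 0) +
          (if tail e ∈ S ∧ head e ∉ S then 1 else 0) := by
    have := le_topLevel ℓ (head e)
    have := le_topLevel ℓ (tail e)
    have := le_topLevel ℓ w
    simp only [rotate, S, mem_filter, mem_univ, true_and]
    split_ifs <;> omega
  have := sum_congr rfl fun e (_ : e ∈ univ) => hedge e
  simp only [sum_add_distrib, ← card_filter] at this
  simp only [descendingEdges]
  omega

theorem sum_spans_eq_of_isEulerian (hEul : IsEulerian tail head) (f : ℕ → R) (v₀ v₁ : V) :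
    ∑ Y ∈ univ.filter (Spans tail head · v₀), f #Y =
      ∑ Y ∈ univ.filter (Spans tail head · v₁), f #Y := by
  rw [sum_spans_eq_sum_levelings, sum_spans_eq_sum_levelings]
  refine sum_nbij' (rotate v₁) (rotate v₀) (fun ℓ hℓ => (rotate_mem_levelings hℓ v₁).1)
    (fun ℓ hℓ => (rotate_mem_levelings hℓ v₀).1) (fun ℓ hℓ => rotate_rotate hℓ v₁)
    (fun ℓ hℓ => rotate_rotate hℓ v₀) fun ℓ hℓ => ?_
  rw [(rotate_mem_levelings hℓ v₁).2, sum_powerset_apply_card, sum_powerset_apply_card,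
    card_descendingEdges_rotate hEul]

end Rotation

end BranchingGreedoid

theorem greedoid_polynomial_root_independent_general [Fintype V] [Fintype E]
    (tail head : E → V)
    (hEul : ∀ v : V, {e : E | head e = v}.ncard = {e : E | tail e = v}.ncard)
    (v₀ v₁ : V) :
    ∀ x : ℝ, greedoidPolyEval tail head v₀ x = greedoidPolyEval tail head v₁ x := by
  intro x
  rw [BranchingGreedoid.greedoidPolyEval_eq_sum_spans,
    BranchingGreedoid.greedoidPolyEval_eq_sum_spans]
  exact BranchingGreedoid.sum_spans_eq_of_isEulerian hEul
    (fun m => (x - 1) ^ (Fintype.card E + 1 - Fintype.card V - (Fintype.card E - m))) v₀ v₁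

/-- For a connected Eulerian digraph, the greedoid polynomial of the
directed branching greedoid is independent of the root vertex. -/
theorem greedoid_polynomial_root_independent [Fintype V] [Fintype E]
    (tail head : E → V)
    (hconn : ∀ u v : V, Relation.ReflTransGen
      (fun a b => ∃ e : E, (tail e = a ∧ head e = b) ∨ (tail e = b ∧ head e = a)) u v)
    (hEul : ∀ v : V, {e : E | head e = v}.ncard = {e : E | tail e = v}.ncard)
    (v₀ v₁ : V) :
    ∀ x : ℝ, greedoidPolyEval tail head v₀ x = greedoidPolyEval tail head v₁ x :=
  greedoid_polynomial_root_independent_general tail head hEul v₀ v₁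

end
end
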